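/- arXiv:2208.06783 — 2 statements merged into one kernel-verified Lean document; each statement's English description precedes it below -/
import Mathlib

section
/- For a scalar continuously differentiable function x : [0,∞) → ℝ and α ∈ (0,1), the Caputo derivative satisfies D^α(x²)(t) ≤ 2 x(t) D^α x(t) for all t ≥ 0. -/
noncomputable def caputo (α : ℝ) (f : ℝ → ℝ) (t : ℝ) : ℝ :=
  (1 / Real.Gamma (1 - α)) * ∫ τ in (0:ℝ)..t, deriv f τ * (t - τ) ^ (-α)

/-!
Write `y = x - x t` and `w τ = (t - τ) ^ (-α)`. Since `(x²)' = 2 x x'`, the difference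
`D^α(x²)(t) - 2 x(t) D^α x(t)` is `2 / Γ(1 - α)` times `∫₀ᵗ y y' w`. Integrating by parts
on `[0, s]` with `s < t`, the term `∫ (y² / 2) w'` is nonnegative because `w` is increasing,
so the truncated integral is at most `y(s)² w(s) / 2`. As `s → t⁻` this bound tends to `0`:
`y(t) = 0` makes `y(s) = O(t - s)`, and `(t - s)² w(s) = (t - s) ^ (2 - α)`.
-/

open Filter Set Topology MeasureTheory intervalIntegral
open scoped Interval

section

variable {a t α : ℝ}

lemma intervalIntegrable_mul_sub_rpow {f : ℝ → ℝ} (hf : ContinuousOn f [[a, t]])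
    (hα : α < 1) :
    IntervalIntegrable (fun τ => f τ * (t - τ) ^ (-α)) volume a t := by
  have hw : IntervalIntegrable (fun τ => (t - τ) ^ (-α)) volume a t := by
    simpa using (intervalIntegrable_rpow' (a := t - a) (b := 0) (by linarith)).comp_sub_left t
  exact hw.continuousOn_mul hf

lemma integral_mul_deriv_mul_le {y w w' : ℝ → ℝ} {s : ℝ} (has : a ≤ s)
    (hy : ContDiff ℝ 1 y)
    (hw : ∀ τ ∈ Icc a s, HasDerivAt w (w' τ) τ) (hw'_int : IntervalIntegrable w' volume a s)
    (hw'_nonneg : ∀ τ ∈ Icc a s, 0 ≤ w' τ) (hwa : 0 ≤ w a) :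
    ∫ τ in a..s, y τ * deriv y τ * w τ ≤ y s ^ 2 * w s / 2 := by
  have hyd : ∀ τ, HasDerivAt (fun τ => y τ ^ 2 / 2) (y τ * deriv y τ) τ := fun τ =>
    ((((hy.differentiable one_ne_zero) τ).hasDerivAt.pow 2).div_const 2).congr_deriv (by ring)
  have hy'_int : IntervalIntegrable (fun τ => y τ * deriv y τ) volume a s :=
    (hy.continuous.mul (hy.continuous_deriv le_rfl)).intervalIntegrable a s
  have ibp := integral_mul_deriv_eq_deriv_mul (fun τ _ => hyd τ)
    (fun τ hτ => hw τ (by rwa [uIcc_of_le has] at hτ)) hy'_int hw'_int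
  have hrem : 0 ≤ ∫ τ in a..s, y τ ^ 2 / 2 * w' τ :=
    integral_nonneg has fun τ hτ => mul_nonneg (by positivity) (hw'_nonneg τ hτ)
  have hbdry : 0 ≤ y a ^ 2 / 2 * w a := mul_nonneg (by positivity) hwa
  linarith

lemma tendsto_sq_mul_sub_rpow_nhdsLT {y : ℝ → ℝ} {y' : ℝ} (hy : HasDerivAt y y' t)
    (hyt : y t = 0) (hα : α < 2) :
    Tendsto (fun s => y s ^ 2 * (t - s) ^ (-α)) (𝓝[<] t) (𝓝 0) := by
  have hslope : Tendsto (slope y t) (𝓝[<] t) (𝓝 y') :=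
    hy.tendsto_slope.mono_left (nhdsWithin_mono _ fun _ h => ne_of_lt h)
  have hpow : Tendsto (fun s => (t - s) ^ (2 - α)) (𝓝[<] t) (𝓝 0) := by
    have : ContinuousAt (fun s => (t - s) ^ (2 - α)) t :=
      (continuous_const.sub continuous_id).continuousAt.rpow_const (Or.inr (by linarith))
    simpa [Real.zero_rpow (by linarith : 2 - α ≠ 0)] using
      this.tendsto.mono_left nhdsWithin_le_nhds
  have hlim := (hslope.pow 2).mul hpow
  rw [mul_zero] at hlim
  refine hlim.congr' (eventually_nhdsWithin_of_forall fun s (hs : s < t) => ?_)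
  have hts : 0 < t - s := sub_pos.2 hs
  have hst : s - t ≠ 0 := by linarith
  dsimp only
  rw [slope_def_field, hyt, sub_zero, Real.rpow_sub hts, Real.rpow_two, Real.rpow_neg hts.le]
  field_simp
  ring

theorem integral_mul_deriv_mul_sub_rpow_nonpos {y : ℝ → ℝ} (hy : ContDiff ℝ 1 y)
    (hat : a ≤ t) (hα0 : 0 ≤ α) (hα1 : α < 1) (hyt : y t = 0) :
    ∫ τ in a..t, y τ * deriv y τ * (t - τ) ^ (-α) ≤ 0 := by
  rcases hat.eq_or_lt with rfl | hat
  · simp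
  have hprim : Tendsto (fun s => ∫ τ in a..s, y τ * deriv y τ * (t - τ) ^ (-α)) (𝓝[<] t)
      (𝓝 (∫ τ in a..t, y τ * deriv y τ * (t - τ) ^ (-α))) := by
    have hint := intervalIntegrable_mul_sub_rpow (a := a) (t := t)
      (f := fun τ => y τ * deriv y τ)
      (hy.continuous.mul (hy.continuous_deriv le_rfl)).continuousOn hα1
    have hcont := continuousOn_primitive_interval' hint left_mem_uIcc t right_mem_uIcc
    rw [uIcc_of_le hat.le] at hcont
    rw [← nhdsWithin_Ioo_eq_nhdsLT hat]
    exact hcont.tendsto.mono_left (nhdsWithin_mono _ Ioo_subset_Icc_self)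
  have hbound := (tendsto_sq_mul_sub_rpow_nhdsLT (α := α)
    ((hy.differentiable one_ne_zero) t).hasDerivAt hyt (by linarith)).div_const 2
  rw [zero_div] at hbound
  refine le_of_tendsto_of_tendsto hprim hbound ?_
  filter_upwards [Ioo_mem_nhdsLT hat] with s ⟨has, hst⟩
  have hpos : ∀ τ ∈ Icc a s, 0 < t - τ := fun τ hτ => by linarith [hτ.2]
  refine integral_mul_deriv_mul_le has.le hy (w' := fun τ => α * (t - τ) ^ (-α - 1))
    (fun τ hτ => (((hasDerivAt_id τ).const_sub t).rpow_const (p := -α)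
      (Or.inl (hpos τ hτ).ne')).congr_deriv (by simp)) ?_
    (fun τ hτ => by have := hpos τ hτ; positivity) (Real.rpow_nonneg (by linarith) _)
  refine ContinuousOn.intervalIntegrable fun τ hτ => ?_
  rw [uIcc_of_le has.le] at hτ
  exact (continuousAt_const.mul ((continuous_const.sub continuous_id).continuousAt.rpow_const
    (Or.inl (hpos τ hτ).ne'))).continuousWithinAt

end

lemma caputo_sq_sub_two_mul_caputo {α : ℝ} (hα : α < 1) {x : ℝ → ℝ}
    (hx : ContDiff ℝ 1 x) (t : ℝ) :
    caputo α (fun τ => x τ ^ 2) t - 2 * x t * caputo α x t =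
      2 / Real.Gamma (1 - α) *
        ∫ τ in (0:ℝ)..t, (x τ - x t) * deriv x τ * (t - τ) ^ (-α) := by
  have hx' := hx.continuous_deriv le_rfl
  have hsq : ∀ τ, deriv (fun τ => x τ ^ 2) τ = 2 * x τ * deriv x τ := fun τ =>
    ((((hx.differentiable one_ne_zero) τ).hasDerivAt.pow 2).congr_deriv (by ring)).deriv
  have hsplit : ∀ τ, 2 * x τ * deriv x τ * (t - τ) ^ (-α) =
      2 * ((x τ - x t) * deriv x τ * (t - τ) ^ (-α)) +
        2 * x t * (deriv x τ * (t - τ) ^ (-α)) :=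
    fun τ => by ring
  simp only [caputo, hsq, hsplit]
  rw [integral_add ((intervalIntegrable_mul_sub_rpow (f := fun τ => (x τ - x t) * deriv x τ)
      ((hx.continuous.sub continuous_const).mul hx').continuousOn hα).const_mul 2)
    ((intervalIntegrable_mul_sub_rpow hx'.continuousOn hα).const_mul _),
    intervalIntegral.integral_const_mul, intervalIntegral.integral_const_mul]
  ring

theorem caputo_sq_le (α : ℝ) (hα : α ∈ Set.Ioo (0:ℝ) 1)
    (x : ℝ → ℝ) (hx : ContDiff ℝ 1 x) :
    ∀ t, 0 ≤ t → caputo α (fun τ => (x τ) ^ 2) t ≤ 2 * x t * caputo α x t := by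
  intro t ht
  have key := integral_mul_deriv_mul_sub_rpow_nonpos (y := fun τ => x τ - x t)
    (hx.sub contDiff_const) ht hα.1.le hα.2 (sub_self _)
  simp only [deriv_sub_const] at key
  have hΓ : 0 < Real.Gamma (1 - α) := Real.Gamma_pos_of_pos (by linarith [hα.2])
  have hdiff := caputo_sq_sub_two_mul_caputo hα.2 hx t
  have hneg : 2 / Real.Gamma (1 - α) * _ ≤ 0 :=
    mul_nonpos_of_nonneg_of_nonpos (by positivity) key
  linarith
end

section
/- Let P ∈ ℝ^{n×n} be symmetric positive definite and x : [0,∞) → ℝⁿ continuously differentiable. Then for α ∈ (0,1), D^α(xᵀPx)(t) ≤ (D^α x(t))ᵀ P x(t) + x(t)ᵀ P D^α x(t) for all t ≥ 0, where D^α is the componentwise Caputo derivative. -/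
/-! Set `g τ = (x τ - x t)ᵀ P (x τ - x t)`. By symmetry of `P`,
`xᵀ P x = g + 2 xᵀ P x(t) - x(t)ᵀ P x(t)`, so by linearity of the Caputo derivative the
claim reduces to `D^α g (t) ≤ 0`. Now `g ≥ 0` and `g t = 0`; integrating by parts on `[0, s]`
against the kernel `(t - τ)^(-α)`, which is increasing in `τ`, gives
`∫₀ˢ g'(τ) (t - τ)^(-α) dτ ≤ g s (t - s)^(-α)`, and the right side tends to `0` as `s → t⁻`
because `g` vanishes at `t` to first order while `α < 1`. -/

open Matrix

open MeasureTheory Set Filter Topology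

theorem Matrix.IsSymm.dotProduct_mulVec_comm {ι R : Type*} [Fintype ι] [CommSemiring R]
    {P : Matrix ι ι R} (hP : P.IsSymm) (v w : ι → R) : v ⬝ᵥ P *ᵥ w = w ⬝ᵥ P *ᵥ v := by
  rw [dotProduct_mulVec, ← mulVec_transpose, hP.eq, dotProduct_comm]

section

variable {α t : ℝ}

theorem intervalIntegrable_sub_rpow_neg (hα : α < 1) (t : ℝ) :
    IntervalIntegrable (fun τ => (t - τ) ^ (-α)) volume 0 t := by
  simpa using ((intervalIntegral.intervalIntegrable_rpow' (r := -α) (a := 0) (b := t)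
    (by linarith)).comp_sub_left t).symm

theorem integral_deriv_mul_sub_rpow_neg_le {g g' : ℝ → ℝ} {s : ℝ} (hα : 0 ≤ α) (hs : 0 ≤ s)
    (hst : s < t) (hg : ∀ τ ∈ Icc 0 s, HasDerivAt g (g' τ) τ)
    (hg' : ContinuousOn g' (Icc 0 s)) (hg_nonneg : ∀ τ ∈ Icc 0 s, 0 ≤ g τ) :
    ∫ τ in 0..s, g' τ * (t - τ) ^ (-α) ≤ g s * (t - s) ^ (-α) := by
  have hw : ∀ τ ∈ Icc 0 s, HasDerivAt (fun τ => (t - τ) ^ (-α)) (α * (t - τ) ^ (-α - 1)) τ := by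
    intro τ hτ
    have := ((hasDerivAt_id' τ).const_sub t).rpow_const (p := -α)
      (Or.inl (by linarith [hτ.2] : (0:ℝ) < t - τ).ne')
    convert this using 1
    ring
  have hw' : ContinuousOn (fun τ => α * (t - τ) ^ (-α - 1)) (Icc 0 s) :=
    continuousOn_const.mul <| (continuousOn_const.sub continuousOn_id).rpow_const
      fun τ hτ => Or.inl (by linarith [hτ.2] : (0:ℝ) < t - τ).ne'
  have ibp := intervalIntegral.integral_mul_deriv_eq_deriv_mul
    (by rwa [uIcc_of_le hs]) (by rwa [uIcc_of_le hs]) (hw'.intervalIntegrable_of_Icc hs)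
    (hg'.intervalIntegrable_of_Icc hs)
  simp only [mul_comm _ (g' _)] at ibp
  rw [ibp, mul_comm (g s)]
  have h0 : 0 ≤ (t - 0) ^ (-α) * g 0 :=
    mul_nonneg (Real.rpow_nonneg (by linarith) _) (hg_nonneg 0 ⟨le_rfl, hs⟩)
  have hint : 0 ≤ ∫ τ in 0..s, α * (t - τ) ^ (-α - 1) * g τ :=
    intervalIntegral.integral_nonneg hs fun τ hτ =>
      mul_nonneg (mul_nonneg hα (Real.rpow_nonneg (by linarith [hτ.2]) _)) (hg_nonneg τ hτ)
  linarith

theorem tendsto_mul_sub_rpow_neg_nhdsLT {g : ℝ → ℝ} {d : ℝ} (hα : α < 1)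
    (hg : HasDerivAt g d t) (hgt : g t = 0) :
    Tendsto (fun s => g s * (t - s) ^ (-α)) (𝓝[<] t) (𝓝 0) := by
  have hslope : Tendsto (fun s => (s - t)⁻¹ * g s) (𝓝[<] t) (𝓝 d) :=
    ((hasDerivAt_iff_tendsto_slope.1 hg).mono_left (nhdsLT_le_nhdsNE t)).congr fun s => by
      simp [slope, hgt]
  have hpow : Tendsto (fun s => (t - s) ^ (1 - α)) (𝓝[<] t) (𝓝 0) := by
    have hcont : Continuous fun s : ℝ => (t - s) ^ (1 - α) :=
      (continuous_const.sub continuous_id).rpow_const fun _ => Or.inr (by linarith)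
    simpa [Real.zero_rpow (by linarith : (1:ℝ) - α ≠ 0)] using
      (hcont.tendsto t).mono_left nhdsWithin_le_nhds
  have hprod := hslope.neg.mul hpow
  rw [mul_zero] at hprod
  refine hprod.congr' (eventually_nhdsWithin_of_forall fun s (hs : s < t) => ?_)
  have hts : t - s ≠ 0 := (sub_pos.2 hs).ne'
  dsimp only
  rw [show -α = (1 - α) - 1 by ring, Real.rpow_sub_one hts, ← neg_sub t s]
  field_simp

theorem integral_deriv_mul_sub_rpow_neg_nonpos {g g' : ℝ → ℝ} (hα0 : 0 ≤ α) (hα1 : α < 1)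
    (ht : 0 ≤ t) (hg : ∀ τ ∈ Icc 0 t, HasDerivAt g (g' τ) τ) (hg' : ContinuousOn g' (Icc 0 t))
    (hg_nonneg : ∀ τ ∈ Icc 0 t, 0 ≤ g τ) (hgt : g t = 0) :
    ∫ τ in 0..t, g' τ * (t - τ) ^ (-α) ≤ 0 := by
  rcases ht.eq_or_lt with rfl | ht
  · simp
  have hprim : ContinuousWithinAt (fun s => ∫ τ in 0..s, g' τ * (t - τ) ^ (-α)) (Icc 0 t) t := by
    have := intervalIntegral.continuousOn_primitive_interval' (a := 0) (b₁ := 0) (b₂ := t)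
      ((intervalIntegrable_sub_rpow_neg hα1 t).continuousOn_mul (by rwa [uIcc_of_le ht.le]))
      left_mem_uIcc
    rw [uIcc_of_le ht.le] at this
    exact this t (right_mem_Icc.2 ht.le)
  have hbound : ∀ s ∈ Ioo 0 t,
      ∫ τ in 0..s, g' τ * (t - τ) ^ (-α) ≤ g s * (t - s) ^ (-α) := fun s hs =>
    have hsub : Icc 0 s ⊆ Icc 0 t := Icc_subset_Icc_right hs.2.le
    integral_deriv_mul_sub_rpow_neg_le hα0 hs.1.le hs.2 (fun τ hτ => hg τ (hsub hτ))
      (hg'.mono hsub) fun τ hτ => hg_nonneg τ (hsub hτ)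
  have hlim := tendsto_mul_sub_rpow_neg_nhdsLT hα1 (hg t (right_mem_Icc.2 ht.le)) hgt
  have hF := (hprim.mono Ioo_subset_Icc_self).tendsto
  rw [nhdsWithin_Ioo_eq_nhdsLT ht] at hF
  refine le_of_tendsto_of_tendsto hF hlim ?_
  rw [← nhdsWithin_Ioo_eq_nhdsLT ht]
  exact eventually_nhdsWithin_of_forall hbound

theorem caputo_nonpos_of_nonneg_of_eq_zero {f : ℝ → ℝ} (hα0 : 0 ≤ α) (hα1 : α < 1)
    (ht : 0 ≤ t) (hf : ContDiff ℝ 1 f) (hf_nonneg : ∀ s ∈ Icc 0 t, 0 ≤ f s) (hft : f t = 0) :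
    caputo α f t ≤ 0 :=
  mul_nonpos_of_nonneg_of_nonpos
    (one_div_nonneg.2 (Real.Gamma_pos_of_pos (by linarith)).le)
    (integral_deriv_mul_sub_rpow_neg_nonpos hα0 hα1 ht
      (fun τ _ => ((hf.differentiable one_ne_zero) τ).hasDerivAt)
      (hf.continuous_deriv le_rfl).continuousOn hf_nonneg hft)

theorem caputo_sub_const (f : ℝ → ℝ) (c : ℝ) :
    caputo α (fun s => f s - c) t = caputo α f t := by
  simp only [caputo, deriv_sub_const]

theorem caputo_const_mul (c : ℝ) (f : ℝ → ℝ) :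
    caputo α (fun s => c * f s) t = c * caputo α f t := by
  simp only [caputo, deriv_const_mul_field', mul_assoc, intervalIntegral.integral_const_mul]
  ring

theorem intervalIntegrable_deriv_mul_sub_rpow_neg {f : ℝ → ℝ} (hα : α < 1)
    (hf : ContDiff ℝ 1 f) :
    IntervalIntegrable (fun τ => deriv f τ * (t - τ) ^ (-α)) volume 0 t :=
  (intervalIntegrable_sub_rpow_neg hα t).continuousOn_mul (hf.continuous_deriv le_rfl).continuousOn

theorem caputo_add {f g : ℝ → ℝ} (hα : α < 1) (hf : ContDiff ℝ 1 f) (hg : ContDiff ℝ 1 g) :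
    caputo α (fun s => f s + g s) t = caputo α f t + caputo α g t := by
  have hderiv : deriv (fun s => f s + g s) = fun τ => deriv f τ + deriv g τ :=
    funext fun τ => deriv_add (hf.differentiable one_ne_zero τ) (hg.differentiable one_ne_zero τ)
  simp only [caputo, hderiv, add_mul, ← mul_add]
  rw [intervalIntegral.integral_add (intervalIntegrable_deriv_mul_sub_rpow_neg hα hf)
    (intervalIntegrable_deriv_mul_sub_rpow_neg hα hg)]

theorem caputo_sum {ι : Type*} (s : Finset ι) {f : ι → ℝ → ℝ} (hα : α < 1)
    (hf : ∀ i ∈ s, ContDiff ℝ 1 (f i)) :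
    caputo α (fun τ => ∑ i ∈ s, f i τ) t = ∑ i ∈ s, caputo α (f i) t := by
  have hderiv : deriv (fun τ => ∑ i ∈ s, f i τ) = fun τ => ∑ i ∈ s, deriv (f i) τ :=
    funext fun τ => deriv_fun_sum fun i hi => (hf i hi).differentiable one_ne_zero τ
  simp only [caputo, hderiv, Finset.sum_mul, ← Finset.mul_sum]
  rw [intervalIntegral.integral_finsetSum fun i hi =>
    intervalIntegrable_deriv_mul_sub_rpow_neg hα (hf i hi)]

theorem caputo_dotProduct_const {ι : Type*} [Fintype ι] {x : ℝ → ι → ℝ} (hα : α < 1)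
    (hx : ∀ i, ContDiff ℝ 1 (fun s => x s i)) (v : ι → ℝ) :
    caputo α (fun s => x s ⬝ᵥ v) t = (fun i => caputo α (fun s => x s i) t) ⬝ᵥ v := by
  simp only [dotProduct]
  rw [caputo_sum _ hα fun i _ => (hx i).mul contDiff_const]
  simp only [mul_comm _ (v _), caputo_const_mul]

end

theorem caputo_quadratic_form_le_general (n : ℕ) (α : ℝ) (hα : α ∈ Set.Ioo (0:ℝ) 1)
    (P : Matrix (Fin n) (Fin n) ℝ) (hPpos : P.PosDef)
    (x : ℝ → Fin n → ℝ) (hx : ∀ i, ContDiff ℝ 1 (fun s => x s i)) :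
    ∀ t, 0 ≤ t →
      caputo α (fun s => x s ⬝ᵥ P.mulVec (x s)) t ≤
        (fun i => caputo α (fun s => x s i) t) ⬝ᵥ P.mulVec (x t)
          + x t ⬝ᵥ P.mulVec (fun i => caputo α (fun s => x s i) t) := by
  intro t ht
  have hP : P.IsSymm := isHermitian_iff_isSymm.1 hPpos.isHermitian
  set m := P *ᵥ x t
  set g := fun s => (x s - x t) ⬝ᵥ P *ᵥ (x s - x t)
  have hq : (fun s => x s ⬝ᵥ P *ᵥ x s) = fun s => g s + 2 * (x s ⬝ᵥ m) - x t ⬝ᵥ m := by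
    funext s
    simp only [g, m, mulVec_sub, dotProduct_sub, sub_dotProduct,
      hP.dotProduct_mulVec_comm (x t) (x s)]
    ring
  have hgC : ContDiff ℝ 1 g := by
    simp only [g, dotProduct, mulVec]
    fun_prop
  have hg_nonpos : caputo α g t ≤ 0 :=
    caputo_nonpos_of_nonneg_of_eq_zero hα.1.le hα.2 ht hgC
      (fun s _ => by
        simpa only [star_trivial] using hPpos.posSemidef.dotProduct_mulVec_nonneg (x s - x t))
      (by simp [g])
  have hxmC : ContDiff ℝ 1 fun s => 2 * (x s ⬝ᵥ m) := by
    simp only [dotProduct]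
    fun_prop
  rw [hq, caputo_sub_const, caputo_add hα.2 hgC hxmC, caputo_const_mul,
    caputo_dotProduct_const hα.2 hx, hP.dotProduct_mulVec_comm (x t)]
  linarith

theorem caputo_quadratic_form_le (n : ℕ) (α : ℝ) (hα : α ∈ Set.Ioo (0:ℝ) 1)
    (P : Matrix (Fin n) (Fin n) ℝ) (hPsymm : P.IsSymm) (hPpos : P.PosDef)
    (x : ℝ → Fin n → ℝ) (hx : ∀ i, ContDiff ℝ 1 (fun s => x s i)) :
    ∀ t, 0 ≤ t →
      caputo α (fun s => x s ⬝ᵥ P.mulVec (x s)) t ≤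
        (fun i => caputo α (fun s => x s i) t) ⬝ᵥ P.mulVec (x t)
          + x t ⬝ᵥ P.mulVec (fun i => caputo α (fun s => x s i) t) :=
  caputo_quadratic_form_le_general n α hα P hPpos x hx
end
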